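/- Let A be symmetric with orthonormal eigenpairs (λ_j, φ_j), λ_1 ≤ … ≤ λ_ℓ < λ_{ℓ+1} ≤ … ≤ λ_n, and let G, ρ be as in the optimal Richardson step. If x = Σ α_j φ_j with P x ≠ 0 (P the projection onto the first ℓ eigenvectors), then the angle between G^k x and the invariant subspace span(φ_1,…,φ_ℓ) satisfies tan∠(G^k x, span(φ_1,…,φ_ℓ)) ≤ ρ^k tan∠(x, span(φ_1,…,φ_ℓ)), where tan∠(y, S) := ‖(I−P_S)y‖/‖P_S y‖. -/

import Mathlib

open Matrix Finset

/-- The Euclidean norm on `Fin m → ℝ`. -/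
noncomputable def euclNorm {m : ℕ} (x : Fin m → ℝ) : ℝ := Real.sqrt (∑ i, x i ^ 2)

/-!
In the orthonormal eigenbasis `φ` the matrix `G` is diagonal with entries
`gⱼ = θ (μ - λⱼ)`, `μ = (λ_{ℓ+1} + λ_n) / 2`. On the wanted block `j ≤ ℓ` we have
`gⱼ ≥ g_ℓ > 0`, on the unwanted block `λⱼ ∈ [λ_{ℓ+1}, λ_n]` gives
`|gⱼ| ≤ θ (λ_n - λ_{ℓ+1}) / 2 = ρ g_ℓ`. Hence each step multiplies `‖Q y‖` by at most `ρ g_ℓ`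
and `‖P y‖` by at least `g_ℓ`, and the tangent by at most `ρ`.
-/

lemma euclNorm_eq_sqrt_dotProduct {m : ℕ} (v : Fin m → ℝ) : euclNorm v = √(v ⬝ᵥ v) := by
  simp only [euclNorm, dotProduct, sq]

lemma pow_mulVec_eq_pow_smul {ι : Type*} [Fintype ι] [DecidableEq ι] {M : Matrix ι ι ℝ}
    {v : ι → ℝ} {a : ℝ} (h : M *ᵥ v = a • v) (k : ℕ) : (M ^ k) *ᵥ v = a ^ k • v := by
  induction k with
  | zero => simp
  | succ k ih => rw [pow_succ, ← mulVec_mulVec, h, mulVec_smul, ih, smul_smul, pow_succ']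

section Orthonormal

variable {ι : Type*} [Fintype ι] [DecidableEq ι] {φ : ι → ι → ℝ}
  (hφ : ∀ i j, φ i ⬝ᵥ φ j = if i = j then (1 : ℝ) else 0)
include hφ

lemma sum_smul_dotProduct_of_orthonormal (s : Finset ι) (c : ι → ℝ) (j : ι) :
    (∑ i ∈ s, c i • φ i) ⬝ᵥ φ j = if j ∈ s then c j else 0 := by
  simp [sum_dotProduct, smul_dotProduct, hφ]

lemma sum_smul_dotProduct_self_of_orthonormal (s : Finset ι) (c : ι → ℝ) :
    (∑ i ∈ s, c i • φ i) ⬝ᵥ (∑ i ∈ s, c i • φ i) = ∑ i ∈ s, c i ^ 2 := by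
  rw [dotProduct_sum]
  refine sum_congr rfl fun i hi => ?_
  rw [dotProduct_smul, sum_smul_dotProduct_of_orthonormal hφ, if_pos hi, smul_eq_mul, sq]

/-- `n` orthonormal vectors in `ℝⁿ` form a basis: `Φᵀ Φ = 1` follows from `Φ Φᵀ = 1`. -/
lemma sum_dotProduct_smul_of_orthonormal (v : ι → ℝ) : ∑ j, (v ⬝ᵥ φ j) • φ j = v := by
  have hcols : (Matrix.of φ)ᵀ * Matrix.of φ = 1 := mul_eq_one_comm.mp <| by
    ext i j
    simpa [Matrix.mul_apply, Matrix.one_apply, dotProduct] using hφ i j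
  calc ∑ j, (v ⬝ᵥ φ j) • φ j = ((Matrix.of φ)ᵀ * Matrix.of φ) *ᵥ v := by
        rw [← mulVec_mulVec]
        ext b
        simp [mulVec, dotProduct, Finset.sum_apply, mul_comm]
    _ = v := by rw [hcols, one_mulVec]

lemma sub_sum_dotProduct_smul_of_orthonormal (s : Finset ι) (v : ι → ℝ) :
    v - ∑ i ∈ s, (v ⬝ᵥ φ i) • φ i = ∑ i ∈ sᶜ, (v ⬝ᵥ φ i) • φ i :=
  sub_eq_iff_eq_add.mpr
    ((sum_compl_add_sum s _).trans (sum_dotProduct_smul_of_orthonormal hφ v)).symm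

lemma pow_mulVec_dotProduct_of_orthonormal {M : Matrix ι ι ℝ} {g : ι → ℝ}
    (hM : ∀ j, M *ᵥ φ j = g j • φ j) (k : ℕ) (v : ι → ℝ) (i : ι) :
    (M ^ k *ᵥ v) ⬝ᵥ φ i = g i ^ k * (v ⬝ᵥ φ i) := by
  calc (M ^ k *ᵥ v) ⬝ᵥ φ i = (∑ j, (g j ^ k * (v ⬝ᵥ φ j)) • φ j) ⬝ᵥ φ i := by
        conv_lhs => rw [← sum_dotProduct_smul_of_orthonormal hφ v]
        simp [mulVec_sum, mulVec_smul, pow_mulVec_eq_pow_smul (hM _), smul_smul, mul_comm]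
    _ = g i ^ k * (v ⬝ᵥ φ i) := by
        rw [sum_smul_dotProduct_of_orthonormal hφ, if_pos (mem_univ i)]

end Orthonormal

lemma euclNorm_sum_smul_of_orthonormal {m : ℕ} {φ : Fin m → Fin m → ℝ}
    (hφ : ∀ i j, φ i ⬝ᵥ φ j = if i = j then (1 : ℝ) else 0)
    (s : Finset (Fin m)) (c : Fin m → ℝ) :
    euclNorm (∑ i ∈ s, c i • φ i) = √(∑ i ∈ s, c i ^ 2) := by
  rw [euclNorm_eq_sqrt_dotProduct, sum_smul_dotProduct_self_of_orthonormal hφ]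

lemma sum_sq_pow_mul_le_of_abs_le {ι : Type*} {s : Finset ι} {g h : ι → ℝ}
    (hgh : ∀ i ∈ s, |g i| ≤ |h i|) (k : ℕ) (c : ι → ℝ) :
    ∑ i ∈ s, (g i ^ k * c i) ^ 2 ≤ ∑ i ∈ s, (h i ^ k * c i) ^ 2 := by
  refine sum_le_sum fun i hi => ?_
  rw [mul_pow, mul_pow, ← sq_abs (g i ^ k), ← sq_abs (h i ^ k), abs_pow, abs_pow]
  have := hgh i hi
  gcongr

lemma sqrt_sum_div_sqrt_sum_pow_mul_le {ι : Type*} [Fintype ι] [DecidableEq ι]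
    {s : Finset ι} {g c : ι → ℝ} {a r : ℝ} (ha : 0 < a) (hr : 0 ≤ r)
    (hs : ∀ i ∈ s, a ≤ |g i|) (hsc : ∀ i ∈ sᶜ, |g i| ≤ r * a)
    (hc : 0 < ∑ i ∈ s, c i ^ 2) (k : ℕ) :
    √(∑ i ∈ sᶜ, (g i ^ k * c i) ^ 2) / √(∑ i ∈ s, (g i ^ k * c i) ^ 2)
      ≤ r ^ k * (√(∑ i ∈ sᶜ, c i ^ 2) / √(∑ i ∈ s, c i ^ 2)) := by
  have hconst : ∀ b : ℝ, 0 ≤ b → ∀ t : Finset ι,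
      √(∑ i ∈ t, (b ^ k * c i) ^ 2) = b ^ k * √(∑ i ∈ t, c i ^ 2) := fun b hb t => by
    rw [show ∑ i ∈ t, (b ^ k * c i) ^ 2 = (b ^ k) ^ 2 * ∑ i ∈ t, c i ^ 2 by
        rw [mul_sum]; exact sum_congr rfl fun i _ => by ring,
      Real.sqrt_mul (sq_nonneg _), Real.sqrt_sq (pow_nonneg hb k)]
  have hnum : √(∑ i ∈ sᶜ, (g i ^ k * c i) ^ 2) ≤ (r * a) ^ k * √(∑ i ∈ sᶜ, c i ^ 2) :=
    (Real.sqrt_le_sqrt (sum_sq_pow_mul_le_of_abs_le (h := fun _ => r * a)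
      (fun i hi => (hsc i hi).trans (le_abs_self _)) k c)).trans_eq
      (hconst _ (by positivity) _)
  have hden : a ^ k * √(∑ i ∈ s, c i ^ 2) ≤ √(∑ i ∈ s, (g i ^ k * c i) ^ 2) :=
    (hconst _ ha.le _).symm.trans_le (Real.sqrt_le_sqrt (sum_sq_pow_mul_le_of_abs_le
      (g := fun _ => a) (fun i hi => (abs_of_pos ha).trans_le (hs i hi)) k c))
  calc √(∑ i ∈ sᶜ, (g i ^ k * c i) ^ 2) / √(∑ i ∈ s, (g i ^ k * c i) ^ 2)
      ≤ (r * a) ^ k * √(∑ i ∈ sᶜ, c i ^ 2) / (a ^ k * √(∑ i ∈ s, c i ^ 2)) :=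
        div_le_div₀ (by positivity) hnum (by positivity) hden
    _ = r ^ k * (√(∑ i ∈ sᶜ, c i ^ 2) / √(∑ i ∈ s, c i ^ 2)) := by
        field_simp
        ring

lemma smul_one_sub_smul_mulVec_of_mulVec_eq_smul {ι : Type*} [Fintype ι] [DecidableEq ι]
    {A : Matrix ι ι ℝ} {v : ι → ℝ} {a : ℝ} (h : A *ᵥ v = a • v) (c θ : ℝ) :
    (c • (1 : Matrix ι ι ℝ) - θ • A) *ᵥ v = (c - θ * a) • v := by
  rw [sub_mulVec, smul_mulVec, one_mulVec, smul_mulVec, h, smul_smul, sub_smul]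

lemma abs_mul_midpoint_sub_le {θ lo hi t lam₀ : ℝ} (hθ : 0 ≤ θ) (hgap : lam₀ < lo)
    (hlo : lo ≤ t) (hhi : t ≤ hi) :
    |θ * ((lo + hi) / 2 - t)|
      ≤ (hi - lo) / (hi + lo - 2 * lam₀) * (θ * ((lo + hi) / 2 - lam₀)) := by
  have hden : hi + lo - 2 * lam₀ ≠ 0 := by linarith
  rw [show (hi - lo) / (hi + lo - 2 * lam₀) * (θ * ((lo + hi) / 2 - lam₀)) = θ * (hi - lo) / 2 by
    field_simp; ring]
  exact abs_le.mpr ⟨by nlinarith, by nlinarith⟩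

theorem tangent_angle_geometric_decay
    (n : ℕ) (A : Matrix (Fin (n + 1)) (Fin (n + 1)) ℝ)
    (φ : Fin (n + 1) → (Fin (n + 1) → ℝ)) (lam : Fin (n + 1) → ℝ)
    (hortho : ∀ i j, φ i ⬝ᵥ φ j = if i = j then (1 : ℝ) else 0)
    (heig : ∀ j, A.mulVec (φ j) = lam j • φ j)
    (hmono : Monotone lam)
    (ℓ : Fin (n + 1)) (hℓ : (ℓ : ℕ) + 1 ≤ n)
    (hgap : lam ℓ < lam ⟨(ℓ : ℕ) + 1, by omega⟩)
    (θ τ : ℝ) (hθ : 0 < θ)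
    (hτ : τ = (lam ⟨(ℓ : ℕ) + 1, by omega⟩ + lam (Fin.last n)) / 2 - 1 / θ - 1)
    (G : Matrix (Fin (n + 1)) (Fin (n + 1)) ℝ)
    (hG : G = (1 + θ * (1 + τ)) • (1 : Matrix (Fin (n + 1)) (Fin (n + 1)) ℝ) - θ • A)
    (ρ : ℝ)
    (hρ : ρ = (lam (Fin.last n) - lam ⟨(ℓ : ℕ) + 1, by omega⟩) /
        (lam (Fin.last n) + lam ⟨(ℓ : ℕ) + 1, by omega⟩ - 2 * lam ℓ))
    (P Q : (Fin (n + 1) → ℝ) → (Fin (n + 1) → ℝ))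
    (hP : ∀ y, P y = ∑ i ∈ Finset.univ.filter (fun i => i ≤ ℓ), (y ⬝ᵥ φ i) • φ i)
    (hQ : ∀ y, Q y = y - P y)
    (x : Fin (n + 1) → ℝ) (hPx : P x ≠ 0) (k : ℕ) :
    euclNorm (Q ((G ^ k).mulVec x)) / euclNorm (P ((G ^ k).mulVec x))
      ≤ ρ ^ k * (euclNorm (Q x) / euclNorm (P x)) := by
  set lo := lam ⟨(ℓ : ℕ) + 1, by omega⟩
  set hi := lam (Fin.last n)
  set s := Finset.univ.filter (fun i => i ≤ ℓ)
  set g : Fin (n + 1) → ℝ := fun j => θ * ((lo + hi) / 2 - lam j)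
  have hlohi : lo ≤ hi := hmono (Fin.le_last _)
  have hGφ : ∀ j, G *ᵥ φ j = g j • φ j := fun j => by
    rw [hG, smul_one_sub_smul_mulVec_of_mulVec_eq_smul (heig j), hτ]
    congr 1
    field_simp
    ring
  have hPnorm : ∀ v, euclNorm (P v) = √(∑ i ∈ s, (v ⬝ᵥ φ i) ^ 2) := fun v => by
    rw [hP, euclNorm_sum_smul_of_orthonormal hortho]
  have hQnorm : ∀ v, euclNorm (Q v) = √(∑ i ∈ sᶜ, (v ⬝ᵥ φ i) ^ 2) := fun v => by
    rw [hQ, hP, sub_sum_dotProduct_smul_of_orthonormal hortho,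
      euclNorm_sum_smul_of_orthonormal hortho]
  have hPx_pos : 0 < ∑ i ∈ s, (x ⬝ᵥ φ i) ^ 2 := by
    refine (sum_nonneg fun i _ => sq_nonneg _).lt_of_ne fun h => hPx ?_
    rw [← dotProduct_self_eq_zero, hP, sum_smul_dotProduct_self_of_orthonormal hortho, h]
  have hgℓ : 0 < g ℓ := mul_pos hθ (by linarith)
  rw [hPnorm, hQnorm, hPnorm, hQnorm]
  simp only [pow_mulVec_dotProduct_of_orthonormal hortho hGφ]
  refine sqrt_sum_div_sqrt_sum_pow_mul_le hgℓ ?_ (fun i his => ?_) (fun j hjs => ?_) hPx_pos k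
  · rw [hρ]; exact div_nonneg (by linarith) (by linarith)
  · have : lam i ≤ lam ℓ := hmono (mem_filter.mp his).2
    exact (mul_le_mul_of_nonneg_left (by linarith) hθ.le).trans (le_abs_self _)
  · have hℓj : ℓ < j := lt_of_not_ge (by simpa [s] using hjs)
    rw [hρ]
    exact abs_mul_midpoint_sub_le hθ.le hgap (hmono (Fin.mk_le_of_le_val hℓj))
      (hmono (Fin.le_last j))
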